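/- Let K be the subgroup of GL⁺(2,ℝ) consisting of all matrices of the form [[1, b], [0, d]] with b ∈ ℝ and d > 0. Then the normal closure of K in GL⁺(2,ℝ) is the whole group GL⁺(2,ℝ). -/

import Mathlib

open Matrix

set_option linter.unreachableTactic false
set_option linter.unusedTactic false

/-- The multiplicative group `ℝ_{>0}` of positive real numbers. -/
abbrev PosReal : Type := {x : ℝ // 0 < x}

/-- The matrix of entries of an element of `GL⁺(2, ℝ)`. -/
abbrev entries (g : Matrix.GLPos (Fin 2) ℝ) : Matrix (Fin 2) (Fin 2) ℝ :=
  ((g : GL (Fin 2) ℝ) : Matrix (Fin 2) (Fin 2) ℝ)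

/-- The subgroup `K` of `GL⁺(2, ℝ)` consisting of all matrices of the form `[[1, b], [0, d]]`
with `b ∈ ℝ` and `d > 0`. -/
noncomputable def K : Subgroup (Matrix.GLPos (Fin 2) ℝ) where
  carrier := {g | entries g 0 0 = 1 ∧ entries g 1 0 = 0 ∧ 0 < entries g 1 1}
  one_mem' := by simp [entries]
  mul_mem' := by
    rintro g h ⟨hg1, hg2, hg3⟩ ⟨hh1, hh2, hh3⟩
    refine ⟨?_, ?_, ?_⟩ <;>
      simp only [entries, Subgroup.coe_mul, Units.val_mul, Matrix.mul_apply,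
        Fin.sum_univ_two] <;>
      simp_all
  inv_mem' := by
    rintro g ⟨hg1, hg2, hg3⟩
    have hdet : (entries g).det = entries g 1 1 := by
      rw [Matrix.det_fin_two, hg1, hg2]; ring
    have hdetpos : 0 < (entries g).det := by rw [hdet]; exact hg3
    have hinv : entries g⁻¹ = (entries g)⁻¹ := by simp [entries]
    refine ⟨?_, ?_, ?_⟩ <;>
      rw [hinv, Matrix.inv_def, Matrix.adjugate_fin_two, Ring.inverse_eq_inv'] <;>
      simp [hg1, hg2, hdet] <;>
      first
      | exact inv_mul_cancel₀ hg3.ne'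
      | positivity

/-- Build an element of `GL⁺(2, ℝ)` from a matrix with positive determinant. -/
noncomputable def mkP (M : Matrix (Fin 2) (Fin 2) ℝ) (h : 0 < M.det) :
    Matrix.GLPos (Fin 2) ℝ :=
  ⟨Matrix.GeneralLinearGroup.mkOfDetNeZero M h.ne', by
    simpa [Matrix.GeneralLinearGroup.mkOfDetNeZero, Matrix.GeneralLinearGroup.mk',
      Matrix.unitOfDetInvertible] using h⟩

@[simp] lemma entries_mkP (M : Matrix (Fin 2) (Fin 2) ℝ) (h : 0 < M.det) :
    entries (mkP M h) = M := rfl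

lemma glpos_ext {g h : Matrix.GLPos (Fin 2) ℝ} (H : entries g = entries h) : g = h :=
  Subtype.ext (Units.ext H)

lemma entries_mul (g h : Matrix.GLPos (Fin 2) ℝ) :
    entries (g * h) = entries g * entries h := rfl

lemma det_entries_pos (g : Matrix.GLPos (Fin 2) ℝ) : 0 < (entries g).det := g.2

lemma U_mem_K (r s : ℝ) (hs : 0 < s)
    (h : 0 < (!![(1:ℝ), r; 0, s]).det) : mkP !![(1:ℝ), r; 0, s] h ∈ K := by
  refine ⟨?_, ?_, ?_⟩ <;> simp [hs]

/-- Upper triangular elements are in the normal closure. -/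
lemma U_mem_N (r s : ℝ) (hs : 0 < s)
    (h : 0 < (!![(1:ℝ), r; 0, s]).det) :
    mkP !![(1:ℝ), r; 0, s] h ∈ Subgroup.normalClosure (K : Set (Matrix.GLPos (Fin 2) ℝ)) :=
  Subgroup.subset_normalClosure (U_mem_K r s hs h)

/-- Lower triangular elements are in the normal closure. -/
lemma L_mem_N (p q : ℝ) (hp : 0 < p)
    (h : 0 < (!![p, 0; q, (1:ℝ)]).det) :
    mkP !![p, 0; q, (1:ℝ)] h ∈ Subgroup.normalClosure (K : Set (Matrix.GLPos (Fin 2) ℝ)) := by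
  have hw : (0:ℝ) < (!![(0:ℝ), -1; 1, 0]).det := by simp [Matrix.det_fin_two_of]
  have hu : (0:ℝ) < (!![(1:ℝ), -q; 0, p]).det := by simp [Matrix.det_fin_two_of, hp]
  have key : mkP !![p, 0; q, (1:ℝ)] h * mkP !![(0:ℝ), -1; 1, 0] hw = mkP !![(0:ℝ), -1; 1, 0] hw * mkP !![(1:ℝ), -q; 0, p] hu := by
    apply glpos_ext
    rw [entries_mul, entries_mul]
    simp only [entries_mkP]
    ext i j
    fin_cases i <;> fin_cases j <;>
      simp [Matrix.mul_apply, Fin.sum_univ_two]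
  have : mkP !![p, 0; q, (1:ℝ)] h = mkP !![(0:ℝ), -1; 1, 0] hw * mkP !![(1:ℝ), -q; 0, p] hu * (mkP !![(0:ℝ), -1; 1, 0] hw)⁻¹ := by
    rw [eq_mul_inv_iff_mul_eq, key]
  rw [this]
  exact (Subgroup.normalClosure_normal).conj_mem _
    (Subgroup.subset_normalClosure (U_mem_K (-q) p hp hu)) _

/-- LU decomposition step: anything with positive top-left entry is in the closure. -/
lemma mem_N_of_pos (g : Matrix.GLPos (Fin 2) ℝ) (ha : 0 < entries g 0 0) :
    g ∈ Subgroup.normalClosure (K : Set (Matrix.GLPos (Fin 2) ℝ)) := by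
  set a := entries g 0 0 with hadef
  set b := entries g 0 1 with hbdef
  set c := entries g 1 0 with hcdef
  set d := entries g 1 1 with hddef
  have hdet : 0 < a * d - b * c := by
    have := det_entries_pos g
    rwa [Matrix.det_fin_two] at this
  have hL : (0:ℝ) < (!![a, 0; c, (1:ℝ)]).det := by simp [Matrix.det_fin_two_of, ha]
  have hU : (0:ℝ) < (!![(1:ℝ), b / a; 0, (a * d - b * c) / a]).det := by
    simp only [Matrix.det_fin_two_of]
    have := div_pos hdet ha
    nlinarith
  have key : g = mkP !![a, 0; c, (1:ℝ)] hL *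
      mkP !![(1:ℝ), b / a; 0, (a * d - b * c) / a] hU := by
    apply glpos_ext
    rw [entries_mul]
    simp only [entries_mkP]
    ext i j
    fin_cases i <;> fin_cases j <;>
      simp [Matrix.mul_apply, Fin.sum_univ_two, ← hadef, ← hbdef, ← hcdef, ← hddef] <;>
      field_simp <;> ring
  rw [key]
  exact Subgroup.mul_mem _ (L_mem_N a c ha hL)
    (U_mem_N (b / a) _ (by positivity) hU)

/-- the normal closure of `K` in `GL⁺(2, ℝ)` is the whole group. -/
theorem normalClosure_K_eq_top :
    Subgroup.normalClosure (K : Set (Matrix.GLPos (Fin 2) ℝ)) = ⊤ := by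
  set N := Subgroup.normalClosure (K : Set (Matrix.GLPos (Fin 2) ℝ)) with hN
  rw [eq_top_iff]
  intro g _
  set a := entries g 0 0 with hadef
  set c := entries g 1 0 with hcdef
  by_cases ha : 0 < a
  · exact mem_N_of_pos g ha
  · -- find x ∈ N with positive top-left of x * g
    suffices h : ∃ x ∈ N, 0 < entries (x * g) 0 0 by
      obtain ⟨x, hx, hpos⟩ := h
      have : g = x⁻¹ * (x * g) := by group
      rw [this]
      exact Subgroup.mul_mem _ (Subgroup.inv_mem _ hx) (mem_N_of_pos _ hpos)
    by_cases hc : c = 0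
    · -- then a < 0; use x = U(-2,1) * L(1,1)
      have hdet : 0 < a * entries g 1 1 - entries g 0 1 * c := by
        have := det_entries_pos g
        rwa [Matrix.det_fin_two] at this
      have haneg : a < 0 := by
        rcases lt_trichotomy a 0 with h | h | h
        · exact h
        · exfalso; rw [h, hc] at hdet; simp at hdet
        · exact absurd h ha
      have hU2 : (0:ℝ) < (!![(1:ℝ), -2; 0, 1]).det := by simp [Matrix.det_fin_two_of]
      have hL1 : (0:ℝ) < (!![(1:ℝ), 0; 1, (1:ℝ)]).det := by simp [Matrix.det_fin_two_of]
      refine ⟨mkP !![(1:ℝ), -2; 0, 1] hU2 * mkP !![(1:ℝ), 0; 1, (1:ℝ)] hL1,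
        Subgroup.mul_mem _ (U_mem_N (-2) 1 one_pos hU2) (L_mem_N 1 1 one_pos hL1), ?_⟩
      have : entries (mkP !![(1:ℝ), -2; 0, 1] hU2 * mkP !![(1:ℝ), 0; 1, (1:ℝ)] hL1 * g) 0 0
          = -a := by
        rw [entries_mul, entries_mul]
        simp only [entries_mkP]
        simp [Matrix.mul_apply, Fin.sum_univ_two, ← hadef, ← hcdef, hc]
        ring
      rw [this]
      linarith
    · -- c ≠ 0; use x = U((1-a)/c, 1)
      have hU2 : (0:ℝ) < (!![(1:ℝ), (1 - a) / c; 0, 1]).det := by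
        simp [Matrix.det_fin_two_of]
      refine ⟨mkP !![(1:ℝ), (1 - a) / c; 0, 1] hU2,
        U_mem_N _ 1 one_pos hU2, ?_⟩
      have : entries (mkP !![(1:ℝ), (1 - a) / c; 0, 1] hU2 * g) 0 0 = 1 := by
        rw [entries_mul]
        simp only [entries_mkP]
        simp [Matrix.mul_apply, Fin.sum_univ_two, ← hadef, ← hcdef]
        field_simp
        ring
      rw [this]
      exact one_pos
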